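/- arXiv:1204.5049 — 5 statements merged into one kernel-verified Lean document; each statement's English description precedes it below -/
import Mathlib

section
/- Let H and K be complex Hilbert spaces, A, B ∈ B(H) positive invertible operators with m₁²I ≤ A ≤ M₁²I and m₂²I ≤ B ≤ M₂²I for positive reals m₁ < M₁ and m₂ < M₂, and let Φ : B(H) → B(K) be a positive linear map. Then (M₂m₂/(M₁m₁))Φ(A) + Φ(B) ≤ (M₂/m₁ + m₂/M₁) Φ(A # B). -/
open scoped InnerProductSpace

noncomputable section

/-- The real power `A ^ r` of a (positive) operator, via the continuous functional calculus. -/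
noncomputable def opPow {H : Type} [NormedAddCommGroup H] [InnerProductSpace ℂ H]
    [CompleteSpace H] (A : H →L[ℂ] H) (r : ℝ) : H →L[ℂ] H :=
  cfc (fun t : ℝ => t ^ r) A

/-- The operator mean `A σ B = A^{1/2} f(A^{-1/2} B A^{-1/2}) A^{1/2}` associated with the
representing function `f`. -/
noncomputable def opMean {H : Type} [NormedAddCommGroup H] [InnerProductSpace ℂ H]
    [CompleteSpace H] (f : ℝ → ℝ) (A B : H →L[ℂ] H) : H →L[ℂ] H :=
  opPow A (1/2) * cfc f (opPow A (-(1/2)) * B * opPow A (-(1/2))) * opPow A (1/2)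

/-- The weighted geometric mean `A #_α B = A^{1/2} (A^{-1/2} B A^{-1/2})^α A^{1/2}`. -/
noncomputable def geoMean {H : Type} [NormedAddCommGroup H] [InnerProductSpace ℂ H]
    [CompleteSpace H] (α : ℝ) (A B : H →L[ℂ] H) : H →L[ℂ] H :=
  opMean (fun t : ℝ => t ^ α) A B

/-- `f : (0,∞) → (0,∞)` is operator monotone: for all positive invertible operators `X ≤ Y`
(on any complex Hilbert space), `f(X) ≤ f(Y)` in the Loewner order. -/
def IsOperatorMonotone (f : ℝ → ℝ) : Prop :=
  ∀ (H : Type) [NormedAddCommGroup H] [InnerProductSpace ℂ H] [CompleteSpace H]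
    (X Y : H →L[ℂ] H), 0 ≤ X → IsUnit X → 0 ≤ Y → IsUnit Y → X ≤ Y →
      cfc f X ≤ cfc f Y

/-!
Put `C = A^{-1/2} B A^{-1/2}`, `a = m₂/M₁`, `b = M₂/m₁`. The bounds give `a² • A ≤ B ≤ b² • A`,
hence `a² ≤ C ≤ b²`, so every `s` in the spectrum of `C^{1/2}` lies in `[a, b]` and
`(s - a)(b - s) ≥ 0`, i.e. `ab + s² ≤ (a + b) s`. By the functional calculus
`ab + C ≤ (a + b) C^{1/2}`; conjugating by `A^{1/2}` turns this into `ab • A + B ≤ (a + b) • A # B`,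
and a positive linear map preserves the order.
-/

open CFC

section CStarAlgebra

variable {𝒜 : Type*} [CStarAlgebra 𝒜] [PartialOrder 𝒜] [StarOrderedRing 𝒜]

lemma smul_le_of_le_smul_one {a b : 𝒜} {r s t : ℝ} (ht : 0 ≤ t) (ha : a ≤ r • 1)
    (hb : s • 1 ≤ b) (h : t * r ≤ s) : t • a ≤ b :=
  calc t • a ≤ t • r • (1 : 𝒜) := smul_le_smul_of_nonneg_left ha ht
    _ = (t * r) • 1 := smul_smul t r 1
    _ ≤ s • 1 := smul_le_smul_of_nonneg_right h zero_le_one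
    _ ≤ b := hb

lemma le_smul_of_smul_one_le {a b : 𝒜} {r s t : ℝ} (ht : 0 ≤ t) (ha : r • 1 ≤ a)
    (hb : b ≤ s • 1) (h : s ≤ t * r) : b ≤ t • a :=
  calc b ≤ s • 1 := hb
    _ ≤ (t * r) • 1 := smul_le_smul_of_nonneg_right h zero_le_one
    _ = t • r • (1 : 𝒜) := (smul_smul t r 1).symm
    _ ≤ t • a := smul_le_smul_of_nonneg_left ha ht

lemma conjugate_rpow_neg_one_half_smul {a : 𝒜} (ha : IsStrictlyPositive a) (r : ℝ) :
    a ^ (-(1 / 2) : ℝ) * (r • a) * a ^ (-(1 / 2) : ℝ) = algebraMap ℝ 𝒜 r := by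
  rw [mul_smul_comm, smul_mul_assoc, conjugate_rpow_neg_one_half a ha,
    Algebra.algebraMap_eq_smul_one]

lemma algebraMap_le_conjugate_rpow_neg_one_half {a b : 𝒜} {r : ℝ} (ha : IsStrictlyPositive a)
    (h : r • a ≤ b) :
    algebraMap ℝ 𝒜 r ≤ a ^ (-(1 / 2) : ℝ) * b * a ^ (-(1 / 2) : ℝ) := by
  have := star_left_conjugate_le_conjugate h (a ^ (-(1 / 2) : ℝ))
  rwa [rpow_nonneg.isSelfAdjoint.star_eq, conjugate_rpow_neg_one_half_smul ha] at this

lemma conjugate_rpow_neg_one_half_le_algebraMap {a b : 𝒜} {r : ℝ} (ha : IsStrictlyPositive a)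
    (h : b ≤ r • a) :
    a ^ (-(1 / 2) : ℝ) * b * a ^ (-(1 / 2) : ℝ) ≤ algebraMap ℝ 𝒜 r := by
  have := star_left_conjugate_le_conjugate h (a ^ (-(1 / 2) : ℝ))
  rwa [rpow_nonneg.isSelfAdjoint.star_eq, conjugate_rpow_neg_one_half_smul ha] at this

lemma conjugate_rpow_one_half_algebraMap {a : 𝒜} (ha : IsStrictlyPositive a) (r : ℝ) :
    a ^ (1 / 2 : ℝ) * algebraMap ℝ 𝒜 r * a ^ (1 / 2 : ℝ) = r • a := by
  rw [Algebra.algebraMap_eq_smul_one, mul_smul_comm, mul_one, smul_mul_assoc, ← rpow_add ha.isUnit]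
  norm_num [rpow_one a ha.nonneg]

lemma conjugate_rpow_one_half_conjugate_rpow_neg_one_half {a : 𝒜} (ha : IsStrictlyPositive a)
    (b : 𝒜) :
    a ^ (1 / 2 : ℝ) * (a ^ (-(1 / 2) : ℝ) * b * a ^ (-(1 / 2) : ℝ)) * a ^ (1 / 2 : ℝ) = b := by
  simp only [mul_assoc, ← rpow_add ha.isUnit]
  rw [← mul_assoc, ← rpow_add ha.isUnit]
  norm_num [rpow_zero a ha.nonneg]

lemma algebraMap_mul_add_le_smul_rpow_one_half {c : 𝒜} {a b : ℝ} (hb : 0 ≤ b)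
    (hlo : algebraMap ℝ 𝒜 (a ^ 2) ≤ c) (hhi : c ≤ algebraMap ℝ 𝒜 (b ^ 2)) :
    algebraMap ℝ 𝒜 (a * b) + c ≤ (a + b) • c ^ (1 / 2 : ℝ) := by
  have hc : 0 ≤ c := (algebraMap_nonneg 𝒜 (sq_nonneg a)).trans hlo
  have hspec_lo := (algebraMap_le_iff_le_spectrum hc.isSelfAdjoint).mp hlo
  have hspec_hi := (le_algebraMap_iff_spectrum_le hc.isSelfAdjoint).mp hhi
  rw [rpow_eq_cfc_real hc, ← cfc_const_mul ..]
  conv_lhs => rw [← cfc_id' ℝ c, ← cfc_const_add ..]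
  refine cfc_mono fun x hx => ?_
  have hx₀ : 0 ≤ x := (sq_nonneg a).trans (hspec_lo x hx)
  have hlo' : a ≤ √x := Real.le_sqrt_of_sq_le (hspec_lo x hx)
  have hhi' : √x ≤ b := Real.sqrt_le_iff.mpr ⟨hb, hspec_hi x hx⟩
  rw [← Real.sqrt_eq_rpow]
  nlinarith [mul_nonneg (sub_nonneg.2 hlo') (sub_nonneg.2 hhi'), Real.sq_sqrt hx₀]

end CStarAlgebra

section Hilbert

variable {H : Type} [NormedAddCommGroup H] [InnerProductSpace ℂ H] [CompleteSpace H]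

lemma opPow_eq_rpow {A : H →L[ℂ] H} (hA : 0 ≤ A) (r : ℝ) : opPow A r = A ^ r :=
  (rpow_eq_cfc_real hA).symm

lemma geoMean_eq_rpow {A B : H →L[ℂ] H} (hA : 0 ≤ A) (hB : 0 ≤ B) (α : ℝ) :
    geoMean α A B =
      A ^ (1 / 2 : ℝ) * (A ^ (-(1 / 2) : ℝ) * B * A ^ (-(1 / 2) : ℝ)) ^ α * A ^ (1 / 2 : ℝ) := by
  have hC : 0 ≤ A ^ (-(1 / 2) : ℝ) * B * A ^ (-(1 / 2) : ℝ) := by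
    have := star_left_conjugate_nonneg hB (A ^ (-(1 / 2) : ℝ))
    rwa [rpow_nonneg.isSelfAdjoint.star_eq] at this
  rw [geoMean, opMean, opPow_eq_rpow hA, opPow_eq_rpow hA, rpow_eq_cfc_real hC]

end Hilbert

theorem stmt_2_general {H K : Type} [NormedAddCommGroup H] [InnerProductSpace ℂ H] [CompleteSpace H]
    [NormedAddCommGroup K] [InnerProductSpace ℂ K] [CompleteSpace K]
    (A B : H →L[ℂ] H) (hA : 0 ≤ A) (hAu : IsUnit A) (hB : 0 ≤ B)
    (m₁ M₁ m₂ M₂ : ℝ) (hm₁ : 0 < m₁) (hM₁ : m₁ < M₁) (hm₂ : 0 < m₂) (hM₂ : m₂ < M₂)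
    (hA₁ : (m₁ ^ 2) • (1 : H →L[ℂ] H) ≤ A) (hA₂ : A ≤ (M₁ ^ 2) • (1 : H →L[ℂ] H))
    (hB₁ : (m₂ ^ 2) • (1 : H →L[ℂ] H) ≤ B) (hB₂ : B ≤ (M₂ ^ 2) • (1 : H →L[ℂ] H))
    (Φ : (H →L[ℂ] H) →ₗ[ℂ] (K →L[ℂ] K))
    (hΦ : ∀ X : H →L[ℂ] H, 0 ≤ X → 0 ≤ Φ X) :
    (M₂ * m₂ / (M₁ * m₁)) • Φ A + Φ B ≤ (M₂ / m₁ + m₂ / M₁) • Φ (geoMean (1/2) A B) := by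
  have hA' : IsStrictlyPositive A := hAu.isStrictlyPositive hA
  have hM₁₀ : 0 < M₁ := hm₁.trans hM₁
  have hM₂₀ : 0 < M₂ := hm₂.trans hM₂
  set C := A ^ (-(1 / 2) : ℝ) * B * A ^ (-(1 / 2) : ℝ)
  have hC_lo : algebraMap ℝ _ ((m₂ / M₁) ^ 2) ≤ C :=
    algebraMap_le_conjugate_rpow_neg_one_half hA' <|
      smul_le_of_le_smul_one (by positivity) hA₂ hB₁ (le_of_eq (by field_simp))
  have hC_hi : C ≤ algebraMap ℝ _ ((M₂ / m₁) ^ 2) :=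
    conjugate_rpow_neg_one_half_le_algebraMap hA' <|
      le_smul_of_smul_one_le (by positivity) hA₁ hB₂ (le_of_eq (by field_simp))
  have hconj : (m₂ / M₁ * (M₂ / m₁)) • A + B ≤ (m₂ / M₁ + M₂ / m₁) • geoMean (1 / 2) A B := by
    have := star_left_conjugate_le_conjugate
      (algebraMap_mul_add_le_smul_rpow_one_half (by positivity) hC_lo hC_hi) (A ^ (1 / 2 : ℝ))
    rwa [rpow_nonneg.isSelfAdjoint.star_eq, mul_add, add_mul,
      conjugate_rpow_one_half_algebraMap hA',
      conjugate_rpow_one_half_conjugate_rpow_neg_one_half hA', mul_smul_comm, smul_mul_assoc, ← geoMean_eq_rpow hA hB] at this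
  have hΦmono : Monotone Φ := (PositiveLinearMap.mk₀ Φ hΦ).monotone'
  convert hΦmono hconj using 1
  · rw [map_add, LinearMap.map_smul_of_tower]
    congr 2
    ring
  · rw [LinearMap.map_smul_of_tower, add_comm]

/-- **Diaz–Metcalf type inequality of the second type.** -/
theorem stmt_2 {H K : Type} [NormedAddCommGroup H] [InnerProductSpace ℂ H] [CompleteSpace H]
    [NormedAddCommGroup K] [InnerProductSpace ℂ K] [CompleteSpace K]
    (A B : H →L[ℂ] H) (hA : 0 ≤ A) (hAu : IsUnit A) (hB : 0 ≤ B) (hBu : IsUnit B)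
    (m₁ M₁ m₂ M₂ : ℝ) (hm₁ : 0 < m₁) (hM₁ : m₁ < M₁) (hm₂ : 0 < m₂) (hM₂ : m₂ < M₂)
    (hA₁ : (m₁ ^ 2) • (1 : H →L[ℂ] H) ≤ A) (hA₂ : A ≤ (M₁ ^ 2) • (1 : H →L[ℂ] H))
    (hB₁ : (m₂ ^ 2) • (1 : H →L[ℂ] H) ≤ B) (hB₂ : B ≤ (M₂ ^ 2) • (1 : H →L[ℂ] H))
    (Φ : (H →L[ℂ] H) →ₗ[ℂ] (K →L[ℂ] K))
    (hΦ : ∀ X : H →L[ℂ] H, 0 ≤ X → 0 ≤ Φ X) :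
    (M₂ * m₂ / (M₁ * m₁)) • Φ A + Φ B ≤ (M₂ / m₁ + m₂ / M₁) • Φ (geoMean (1/2) A B) :=
  stmt_2_general A B hA hAu hB m₁ M₁ m₂ M₂ hm₁ hM₁ hm₂ hM₂ hA₁ hA₂ hB₁ hB₂ Φ hΦ
end
end

section
/- Let H and K be complex Hilbert spaces, A, B ∈ B(H) positive invertible operators with m²A ≤ B ≤ M²A for positive reals m < M, and let Φ : B(H) → B(K) be a positive linear map. Then MmΦ(A) + Φ(B) ≤ (M + m)Φ(A # B). -/
open scoped InnerProductSpace

noncomputable section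

set_option maxHeartbeats 1000000

/-- **Diaz–Metcalf type inequality of the first type.** -/
theorem stmt_3 {H K : Type} [NormedAddCommGroup H] [InnerProductSpace ℂ H] [CompleteSpace H]
    [NormedAddCommGroup K] [InnerProductSpace ℂ K] [CompleteSpace K]
    (A B : H →L[ℂ] H) (hA : 0 ≤ A) (hAu : IsUnit A) (hB : 0 ≤ B) (hBu : IsUnit B)
    (m M : ℝ) (hm : 0 < m) (hM : m < M)
    (h₁ : (m ^ 2) • A ≤ B) (h₂ : B ≤ (M ^ 2) • A)
    (Φ : (H →L[ℂ] H) →ₗ[ℂ] (K →L[ℂ] K))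
    (hΦ : ∀ X : H →L[ℂ] H, 0 ≤ X → 0 ≤ Φ X) :
    (M * m) • Φ A + Φ B ≤ (M + m) • Φ (geoMean (1/2) A B) := by
  have hAsa : IsSelfAdjoint A := hA.isSelfAdjoint
  have hBsa : IsSelfAdjoint B := hB.isSelfAdjoint
  have hAspec : ∀ t ∈ spectrum ℝ A, 0 < t := by
    intro t ht
    rcases (spectrum_nonneg_of_nonneg hA ht).lt_or_eq with h | h
    · exact h
    · exact absurd (h ▸ ht) (spectrum.zero_notMem ℝ hAu)
  set P := opPow A (1/2) with hPdef
  set Q := opPow A (-(1/2)) with hQdef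
  have hPsa : IsSelfAdjoint P := cfc_predicate _ A
  have hQsa : IsSelfAdjoint Q := cfc_predicate _ A
  have hcont : ∀ r : ℝ, ContinuousOn (fun t : ℝ => t ^ r) (spectrum ℝ A) := by
    intro r t ht
    exact (Real.continuousAt_rpow_const t r (Or.inl (hAspec t ht).ne')).continuousWithinAt
  have hQP : Q * P = 1 := by
    rw [hPdef, hQdef, opPow, opPow, ← cfc_mul _ _ A (hcont _) (hcont _)]
    rw [show (1 : H →L[ℂ] H) = cfc (1 : ℝ → ℝ) A from (cfc_one ℝ A).symm]
    apply cfc_congr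
    intro t ht
    have h0 := hAspec t ht
    simp only [Pi.one_apply]
    rw [← Real.rpow_add h0]
    norm_num
  have hPQ : P * Q = 1 := by
    rw [hPdef, hQdef, opPow, opPow, ← cfc_mul _ _ A (hcont _) (hcont _)]
    rw [show (1 : H →L[ℂ] H) = cfc (1 : ℝ → ℝ) A from (cfc_one ℝ A).symm]
    apply cfc_congr
    intro t ht
    have h0 := hAspec t ht
    simp only [Pi.one_apply]
    rw [← Real.rpow_add h0]
    norm_num
  have hPP : P * P = A := by
    rw [hPdef, opPow, ← cfc_mul _ _ A (hcont _) (hcont _)]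
    nth_rewrite 2 [← cfc_id ℝ A]
    apply cfc_congr
    intro t ht
    have h0 := hAspec t ht
    simp only [id_eq]
    rw [← Real.rpow_add h0]
    norm_num
  have hQAQ : Q * A * Q = 1 := by
    rw [← hPP, show Q * (P * P) * Q = (Q * P) * (P * Q) by noncomm_ring, hQP, hPQ, one_mul]
  set C := Q * B * Q with hCdef
  have hCsa : IsSelfAdjoint C := by
    rw [hCdef, IsSelfAdjoint, star_mul, star_mul, hQsa.star_eq, hBsa.star_eq, mul_assoc]
  have hc1 : (m ^ 2) • (1 : H →L[ℂ] H) ≤ C := by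
    have := star_left_conjugate_le_conjugate h₁ Q
    rwa [hQsa.star_eq, mul_smul_comm, smul_mul_assoc, hQAQ] at this
  have hc2 : C ≤ (M ^ 2) • (1 : H →L[ℂ] H) := by
    have := star_left_conjugate_le_conjugate h₂ Q
    rwa [hQsa.star_eq, mul_smul_comm, smul_mul_assoc, hQAQ] at this
  have hCspec : ∀ t ∈ spectrum ℝ C, m ^ 2 ≤ t ∧ t ≤ M ^ 2 := by
    intro t ht
    constructor
    · refine (algebraMap_le_iff_le_spectrum (r := m ^ 2) (a := C) hCsa).mp ?_ t ht
      rwa [Algebra.algebraMap_eq_smul_one]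
    · refine (le_algebraMap_iff_spectrum_le (r := M ^ 2) (a := C) hCsa).mp ?_ t ht
      rwa [Algebra.algebraMap_eq_smul_one]
  have hcontC : ContinuousOn (fun t : ℝ => t ^ (1/2 : ℝ)) (spectrum ℝ C) := by
    intro t ht
    have h0 : (0:ℝ) < t := lt_of_lt_of_le (by positivity) (hCspec t ht).1
    exact (Real.continuousAt_rpow_const t _ (Or.inl h0.ne')).continuousWithinAt
  set f : ℝ → ℝ := fun t : ℝ => t ^ (1/2 : ℝ) with hfdef
  have key : (M * m) • (1 : H →L[ℂ] H) + C ≤ (M + m) • cfc f C := by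
    rw [← sub_nonneg]
    have e1 : cfc (fun t : ℝ => (M + m) * f t) C = (M + m) • cfc f C :=
      cfc_const_mul _ _ C hcontC
    have e2 : cfc (fun t : ℝ => M * m + t) C = (M * m) • (1 : H →L[ℂ] H) + C := by
      rw [cfc_const_add (M * m) (fun t : ℝ => t) C (continuousOn_id),
        Algebra.algebraMap_eq_smul_one, cfc_id' ℝ C hCsa]
    have heq : cfc (fun t : ℝ => (M + m) * f t - (M * m + t)) C
        = (M + m) • cfc f C - ((M * m) • (1 : H →L[ℂ] H) + C) := by
      rw [cfc_sub (fun t : ℝ => (M + m) * f t) (fun t : ℝ => M * m + t) C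
        (continuousOn_const.mul hcontC)
        ((continuous_const.add continuous_id).continuousOn), e1, e2]
    rw [← heq]
    apply cfc_nonneg
    intro t ht
    obtain ⟨h1, h2⟩ := hCspec t ht
    have h0 : (0:ℝ) ≤ t := le_trans (by positivity) h1
    have hs : Real.sqrt t ^ 2 = t := Real.sq_sqrt h0
    have hms : m ≤ Real.sqrt t := by
      have := Real.sqrt_le_sqrt h1
      rwa [Real.sqrt_sq hm.le] at this
    have hsM : Real.sqrt t ≤ M := by
      have := Real.sqrt_le_sqrt h2
      rwa [Real.sqrt_sq (hm.trans hM).le] at this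
    simp only [hfdef, ← Real.sqrt_eq_rpow]
    nlinarith [hs, hms, hsM]
  have hPCP : P * C * P = B := by
    rw [hCdef, show P * (Q * B * Q) * P = (P * Q) * B * (Q * P) by noncomm_ring,
      hPQ, hQP, one_mul, mul_one]
  have hgeo : geoMean (1/2) A B = P * cfc f C * P := by
    unfold geoMean opMean
    rfl
  have key2 : (M * m) • A + B ≤ (M + m) • geoMean (1/2) A B := by
    have h := star_left_conjugate_le_conjugate key P
    rw [hPsa.star_eq] at h
    have lhs_eq : P * ((M * m) • (1 : H →L[ℂ] H) + C) * P = (M * m) • A + B := by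
      rw [mul_add, add_mul, mul_smul_comm, smul_mul_assoc, mul_one, hPP, hPCP]
    have rhs_eq : P * ((M + m) • cfc f C) * P = (M + m) • geoMean (1/2) A B := by
      rw [mul_smul_comm, smul_mul_assoc, hgeo]
    rwa [lhs_eq, rhs_eq] at h
  have mono : Φ ((M * m) • A + B) ≤ Φ ((M + m) • geoMean (1/2) A B) := by
    rw [← sub_nonneg, ← map_sub]
    exact hΦ _ (by rwa [sub_nonneg])
  have smulΦ : ∀ (r : ℝ) (X : H →L[ℂ] H), Φ (r • X) = r • Φ X := by
    intro r X
    rw [← algebraMap_smul ℂ r X, map_smul, algebraMap_smul]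
  rwa [map_add, smulΦ, smulΦ] at mono
end
end

section
/- Let H and K be complex Hilbert spaces, A, B ∈ B(H) with 0 < b₁I ≤ A ≤ a₁I and 0 < b₂I ≤ B ≤ a₂I for scalars 0 < bᵢ < aᵢ (i = 1,2), let Φ : B(H) → B(K) be a positive linear map, and let α ∈ (0,1). Set μ = a₁b₁((b₂a₁⁻¹)^α − (a₂b₁⁻¹)^α)/(b₁b₂ − a₁a₂) and ν = (a₁a₂(b₂a₁⁻¹)^α − b₁b₂(a₂b₁⁻¹)^α)/(a₁a₂ − b₁b₂). Then Φ(A) #_α Φ(B) − Φ(A #_α B) ≤ ((1−α)(μ/α)^{α/(α−1)} − ν) Φ(A). -/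
open scoped InnerProductSpace

noncomputable section

/-!
The function `t ↦ t ^ α` is concave on `[0, ∞)`. Its chord over `[m, M] = [b₂ / a₁, a₂ / b₁]`
is `t ↦ μ t + ν`, and its tangent of slope `μ` is `t ↦ μ t + κ` with
`κ = (1 - α) (μ / α) ^ (α / (α - 1))`. Since `m A ≤ B ≤ M A`, the spectrum of
`A^{-1/2} B A^{-1/2}` lies in `[m, M]`, so the functional calculus and conjugation by `A^{1/2}`
give `μ B + ν A ≤ A #_α B`, hence `μ Φ(B) + ν Φ(A) ≤ Φ(A #_α B)` by positivity of `Φ`.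
Likewise `Φ(B) ≤ M Φ(A)` and the tangent bound give `Φ(A) #_α Φ(B) ≤ μ Φ(B) + κ Φ(A)`, even
when `Φ(A)` is not invertible. Subtracting the two bounds proves the claim.
-/

open Set

lemma ConcaveOn.chord_le {s : Set ℝ} {f : ℝ → ℝ} (hf : ConcaveOn ℝ s f) {m M t : ℝ}
    (hm : m ∈ s) (hM : M ∈ s) (hmM : m < M) (ht : t ∈ Icc m M) :
    (f M - f m) / (M - m) * t + (M * f m - m * f M) / (M - m) ≤ f t := by
  have hMm : 0 < M - m := sub_pos.mpr hmM
  have key := hf.2 hm hM (div_nonneg (sub_nonneg.2 ht.2) hMm.le)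
    (div_nonneg (sub_nonneg.2 ht.1) hMm.le) (by field_simp; ring)
  have hcomb : (M - t) / (M - m) * m + (t - m) / (M - m) * M = t := by
    field_simp
    ring
  simp only [smul_eq_mul, hcomb] at key
  calc _ = (M - t) / (M - m) * f m + (t - m) / (M - m) * f M := by
        field_simp
        ring
    _ ≤ f t := key

lemma rpow_le_mul_add {α μ t : ℝ} (hα0 : 0 < α) (hα1 : α < 1) (hμ : 0 < μ) (ht : 0 ≤ t) :
    t ^ α ≤ μ * t + (1 - α) * (μ / α) ^ (α / (α - 1)) := by
  -- `t ^ α` has slope `μ` at `l`; the bound is the weighted AM-GM inequality for `t` and `l`.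
  set l : ℝ := (μ / α) ^ (1 / (α - 1))
  have hμα : 0 < μ / α := div_pos hμ hα0
  have hl : 0 < l := Real.rpow_pos_of_pos hμα _
  have hl_slope : l ^ (α - 1) = μ / α := by
    rw [← Real.rpow_mul hμα.le, one_div, inv_mul_cancel₀ (by linarith), Real.rpow_one]
  have hl_value : l ^ α = (μ / α) ^ (α / (α - 1)) := by
    rw [← Real.rpow_mul hμα.le, div_eq_mul_inv α, mul_comm α, ← one_div]
  have hamgm : t ^ α * l ^ (1 - α) ≤ α * t + (1 - α) * l :=
    Real.geom_mean_le_arith_mean2_weighted hα0.le (by linarith) ht hl.le (by ring)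
  calc t ^ α = t ^ α * l ^ (1 - α) * l ^ (α - 1) := by
        rw [mul_assoc, ← Real.rpow_add hl]
        norm_num
    _ ≤ (α * t + (1 - α) * l) * l ^ (α - 1) := by gcongr
    _ = μ * t + (1 - α) * (l * l ^ (α - 1)) := by
        rw [hl_slope]
        field_simp [hα0.ne']
    _ = μ * t + (1 - α) * l ^ α := by
        rw [← Real.rpow_one_add' hl.le (by rw [add_sub_cancel]; exact hα0.ne')]
        norm_num
    _ = μ * t + (1 - α) * (μ / α) ^ (α / (α - 1)) := by rw [hl_value]

-- The paper's `μ` and `ν` are the slope and intercept of the chord of `t ↦ t ^ α`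
-- over `[b₂ / a₁, a₂ / b₁]`, with `x = (b₂ / a₁) ^ α` and `y = (a₂ / b₁) ^ α`.
lemma chord_slope_eq {a₁ b₁ a₂ b₂ : ℝ} (ha₁ : a₁ ≠ 0) (hb₁ : b₁ ≠ 0)
    (h : b₁ * b₂ - a₁ * a₂ ≠ 0) (x y : ℝ) :
    a₁ * b₁ * (x - y) / (b₁ * b₂ - a₁ * a₂) = (y - x) / (a₂ / b₁ - b₂ / a₁) := by
  rw [div_sub_div _ _ hb₁ ha₁, div_div_eq_mul_div, div_eq_div_iff h (by grind)]
  ring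

lemma chord_intercept_eq {a₁ b₁ a₂ b₂ : ℝ} (ha₁ : a₁ ≠ 0) (hb₁ : b₁ ≠ 0)
    (h : a₁ * a₂ - b₁ * b₂ ≠ 0) (x y : ℝ) :
    (a₁ * a₂ * x - b₁ * b₂ * y) / (a₁ * a₂ - b₁ * b₂) =
      (a₂ / b₁ * x - b₂ / a₁ * y) / (a₂ / b₁ - b₂ / a₁) := by
  field_simp

section OrderedModule

variable {E : Type*} [AddCommGroup E] [PartialOrder E] [Module ℝ E] [PosSMulMono ℝ E]

lemma div_smul_le_of_le_smul {U X Y : E} {a b : ℝ} (ha : 0 < a) (hb : 0 ≤ b)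
    (hX : X ≤ a • U) (hY : b • U ≤ Y) : (b / a) • X ≤ Y :=
  calc (b / a) • X ≤ (b / a) • a • U := smul_le_smul_of_nonneg_left hX (by positivity)
    _ = b • U := by rw [smul_smul, div_mul_cancel₀ _ ha.ne']
    _ ≤ Y := hY

lemma le_div_smul_of_le_smul {U X Y : E} {a b : ℝ} (ha : 0 ≤ a) (hb : 0 < b)
    (hY : Y ≤ a • U) (hX : b • U ≤ X) : Y ≤ (a / b) • X :=
  calc Y ≤ a • U := hY
    _ = (a / b) • b • U := by rw [smul_smul, div_mul_cancel₀ _ hb.ne']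
    _ ≤ (a / b) • X := smul_le_smul_of_nonneg_left hX (by positivity)

end OrderedModule

section CStarAlgebra

variable {𝒜 : Type*} [CStarAlgebra 𝒜] [PartialOrder 𝒜] [StarOrderedRing 𝒜]

lemma smul_add_smul_one_le_cfc {C : 𝒜} (hC : IsSelfAdjoint C) {f : ℝ → ℝ} {μ ν : ℝ}
    (hf : ContinuousOn f (spectrum ℝ C)) (h : ∀ t ∈ spectrum ℝ C, μ * t + ν ≤ f t) :
    μ • C + ν • (1 : 𝒜) ≤ cfc f C := by
  have key := (cfc_le_iff (fun t => μ * t + ν) f C).mpr h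
  rwa [cfc_add .., cfc_const_mul .., cfc_id' ℝ C, cfc_const .., Algebra.algebraMap_eq_smul_one]
    at key

lemma cfc_le_smul_add_smul_one {C : 𝒜} (hC : IsSelfAdjoint C) {f : ℝ → ℝ} {μ κ : ℝ}
    (hf : ContinuousOn f (spectrum ℝ C)) (h : ∀ t ∈ spectrum ℝ C, f t ≤ μ * t + κ) :
    cfc f C ≤ μ • C + κ • (1 : 𝒜) := by
  have key := (cfc_le_iff f (fun t => μ * t + κ) C).mpr h
  rwa [cfc_add .., cfc_const_mul .., cfc_id' ℝ C, cfc_const .., Algebra.algebraMap_eq_smul_one]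
    at key

lemma spectrum_subset_Icc_of_le {C : 𝒜} (hC : IsSelfAdjoint C) {m M : ℝ}
    (hm : m • (1 : 𝒜) ≤ C) (hM : C ≤ M • (1 : 𝒜)) : spectrum ℝ C ⊆ Icc m M := by
  rw [← Algebra.algebraMap_eq_smul_one] at hm hM
  exact fun t ht => ⟨(algebraMap_le_iff_le_spectrum hC).mp hm t ht,
    (le_algebraMap_iff_spectrum_le hC).mp hM t ht⟩

lemma mul_eq_zero_of_star_conj_eq_zero {Q R : 𝒜} (hQ : 0 ≤ Q) (h : star R * Q * R = 0) :
    Q * R = 0 := by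
  have hsqrt : star (CFC.sqrt Q * R) * (CFC.sqrt Q * R) = 0 := by
    rw [star_mul, (CFC.sqrt_nonneg Q).isSelfAdjoint.star_eq, ← mul_assoc, mul_assoc (star R),
      CFC.sqrt_mul_sqrt_self Q, h]
  rw [← CFC.sqrt_mul_sqrt_self Q, mul_assoc, (CStarRing.star_mul_self_eq_zero_iff _).mp hsqrt,
    mul_zero]

lemma mul_eq_zero_of_le_smul {P Q R : 𝒜} {c : ℝ} (hQ : 0 ≤ Q) (hQP : Q ≤ c • P)
    (hPR : P * R = 0) : Q * R = 0 := by
  refine mul_eq_zero_of_star_conj_eq_zero hQ (le_antisymm ?_ (star_left_conjugate_nonneg hQ R))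
  calc star R * Q * R ≤ star R * (c • P) * R := star_left_conjugate_le_conjugate hQP R
    _ = 0 := by rw [mul_smul_comm, smul_mul_assoc, mul_assoc, hPR, mul_zero, smul_zero]

end CStarAlgebra

section Operator

variable {H : Type} [NormedAddCommGroup H] [InnerProductSpace ℂ H] [CompleteSpace H]

lemma isSelfAdjoint_opPow (A : H →L[ℂ] H) (r : ℝ) : IsSelfAdjoint (opPow A r) :=
  cfc_predicate _ A

lemma opPow_zero {A : H →L[ℂ] H} (hA : IsSelfAdjoint A) : opPow A 0 = 1 := by
  simp only [opPow, Real.rpow_zero]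
  exact cfc_const_one ℝ A

lemma opPow_one {A : H →L[ℂ] H} (hA : IsSelfAdjoint A) : opPow A 1 = A := by
  simp only [opPow, Real.rpow_one]
  exact cfc_id' ℝ A

lemma opPow_mul_opPow {A : H →L[ℂ] H} (hA : ∀ t ∈ spectrum ℝ A, 0 < t) (r s : ℝ) :
    opPow A r * opPow A s = opPow A (r + s) := by
  have hcont (p : ℝ) : ContinuousOn (fun t : ℝ => t ^ p) (spectrum ℝ A) := fun t ht =>
    (Real.continuousAt_rpow_const t p (Or.inl (hA t ht).ne')).continuousWithinAt
  rw [opPow, opPow, opPow, ← cfc_mul _ _ A (hcont r) (hcont s)]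
  exact cfc_congr fun t ht => (Real.rpow_add (hA t ht) r s).symm

lemma opPow_half_mul_self {P : H →L[ℂ] H} (hP : 0 ≤ P) :
    opPow P (1 / 2) * opPow P (1 / 2) = P := by
  have hcont : ContinuousOn (fun t : ℝ => t ^ (1 / 2 : ℝ)) (spectrum ℝ P) :=
    (Real.continuous_rpow_const (by norm_num)).continuousOn
  rw [opPow, ← cfc_mul _ _ P hcont hcont]
  conv_rhs => rw [← cfc_id' ℝ P]
  refine cfc_congr fun t ht => ?_
  rw [← Real.rpow_add_of_nonneg (spectrum_nonneg_of_nonneg hP ht) (by norm_num) (by norm_num)]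
  norm_num

lemma smul_add_smul_le_opMean {A B : H →L[ℂ] H} (hA : IsSelfAdjoint A)
    (hA_pos : ∀ t ∈ spectrum ℝ A, 0 < t) {m M μ ν : ℝ} {f : ℝ → ℝ}
    (hmB : m • A ≤ B) (hBM : B ≤ M • A) (hf : ContinuousOn f (Icc m M))
    (hchord : ∀ t ∈ Icc m M, μ * t + ν ≤ f t) :
    μ • B + ν • A ≤ opMean f A B := by
  set S := opPow A (1 / 2)
  set T := opPow A (-(1 / 2))
  have hST : S * T = 1 := by
    rw [opPow_mul_opPow hA_pos, add_neg_cancel, opPow_zero hA]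
  have hTS : T * S = 1 := by
    rw [opPow_mul_opPow hA_pos, neg_add_cancel, opPow_zero hA]
  have hSS : S * S = A := by
    rw [opPow_mul_opPow hA_pos, add_halves, opPow_one hA]
  have hT := isSelfAdjoint_opPow A (-(1 / 2))
  have hconj_smul (c : ℝ) : T * (c • A) * T = c • (1 : H →L[ℂ] H) := by
    rw [mul_smul_comm, smul_mul_assoc, ← hSS,
      show T * (S * S) * T = T * S * (S * T) by noncomm_ring, hTS, hST, one_mul]
  have hB : IsSelfAdjoint B := ((IsSelfAdjoint.all m).smul hA).of_ge hmB
  have hC : IsSelfAdjoint (T * B * T) := hB.conjugate_self hT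
  have hmC : m • (1 : H →L[ℂ] H) ≤ T * B * T := by
    rw [← hconj_smul m]; exact hT.conjugate_le_conjugate hmB
  have hCM : T * B * T ≤ M • (1 : H →L[ℂ] H) := by
    rw [← hconj_smul M]; exact hT.conjugate_le_conjugate hBM
  have hspec := spectrum_subset_Icc_of_le hC hmC hCM
  have key := (isSelfAdjoint_opPow A (1 / 2)).conjugate_le_conjugate
    (smul_add_smul_one_le_cfc hC (hf.mono hspec) fun t ht => hchord t (hspec ht))
  rwa [mul_add, add_mul, mul_smul_comm, smul_mul_assoc, mul_smul_comm, smul_mul_assoc, mul_one,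
    hSS, show S * (T * B * T) * S = S * T * B * (T * S) by noncomm_ring, hST, hTS, one_mul,
    mul_one] at key

-- `opPow P (1 / 2) * opPow P (-(1 / 2))` is the support projection of `P`, which fixes `Q`
-- because `Q ≤ c • P`.
lemma opPow_conj_eq_of_continuousOn {P Q : H →L[ℂ] H} (hP : 0 ≤ P) (hQ : 0 ≤ Q) {c : ℝ}
    (hQP : Q ≤ c • P)
    (hcont : ContinuousOn (fun t : ℝ => t ^ (-(1 / 2) : ℝ)) (spectrum ℝ P)) :
    opPow P (1 / 2) * (opPow P (-(1 / 2)) * Q * opPow P (-(1 / 2))) * opPow P (1 / 2) = Q := by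
  have hcont' : ContinuousOn (fun t : ℝ => t ^ (1 / 2 : ℝ)) (spectrum ℝ P) :=
    (Real.continuous_rpow_const (by norm_num)).continuousOn
  set E := cfc (fun t : ℝ => t ^ (1 / 2 : ℝ) * t ^ (-(1 / 2) : ℝ)) P
  have hST : opPow P (1 / 2) * opPow P (-(1 / 2)) = E := (cfc_mul _ _ P hcont' hcont).symm
  have hTS : opPow P (-(1 / 2)) * opPow P (1 / 2) = E := by
    rw [opPow, opPow, ← cfc_mul _ _ P hcont hcont']
    exact cfc_congr fun t _ => mul_comm _ _
  have hPE : P * E = P := calc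
    P * E = cfc (fun t : ℝ => t * (t ^ (1 / 2 : ℝ) * t ^ (-(1 / 2) : ℝ))) P := by
      rw [cfc_mul (fun t : ℝ => t) _ P, cfc_id' ℝ P]
    _ = cfc (fun t : ℝ => t) P := cfc_congr fun t ht => by
      rcases (spectrum_nonneg_of_nonneg hP ht).eq_or_lt with rfl | ht_pos
      · simp
      · rw [← Real.rpow_add ht_pos]
        norm_num
    _ = P := cfc_id' ℝ P
  have hQE : Q * E = Q := by
    have := mul_eq_zero_of_le_smul (R := 1 - E) hQ hQP (by rw [mul_sub, mul_one, hPE, sub_self])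
    rwa [mul_sub, mul_one, sub_eq_zero, eq_comm] at this
  have hEQ : E * Q = Q := by
    have hE : IsSelfAdjoint E := cfc_predicate _ P
    simpa only [star_mul, hE.star_eq, hQ.isSelfAdjoint.star_eq] using congrArg star hQE
  calc _ = opPow P (1 / 2) * opPow P (-(1 / 2)) * Q * (opPow P (-(1 / 2)) * opPow P (1 / 2)) := by
        noncomm_ring
    _ = Q := by rw [hST, hTS, hEQ, hQE]

lemma opPow_conj_le {P Q : H →L[ℂ] H} (hP : 0 ≤ P) (hQ : 0 ≤ Q) {c : ℝ} (hQP : Q ≤ c • P) :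
    opPow P (1 / 2) * (opPow P (-(1 / 2)) * Q * opPow P (-(1 / 2))) * opPow P (1 / 2) ≤ Q := by
  by_cases hcont : ContinuousOn (fun t : ℝ => t ^ (-(1 / 2) : ℝ)) (spectrum ℝ P)
  · exact (opPow_conj_eq_of_continuousOn hP hQ hQP hcont).le
  · -- `P` is not invertible and `opPow P (-(1 / 2))` is the junk value `0` of `cfc`
    have hT : opPow P (-(1 / 2)) = 0 := cfc_apply_of_not_continuousOn P hcont
    rw [hT]
    simpa using hQ

lemma opMean_le_smul_add_smul {P Q : H →L[ℂ] H} (hP : 0 ≤ P) (hQ : 0 ≤ Q) {c μ κ : ℝ}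
    {f : ℝ → ℝ} (hQP : Q ≤ c • P) (hμ : 0 ≤ μ) (hf : ContinuousOn f (Ici 0))
    (htangent : ∀ t, 0 ≤ t → f t ≤ μ * t + κ) :
    opMean f P Q ≤ μ • Q + κ • P := by
  set S := opPow P (1 / 2)
  set T := opPow P (-(1 / 2))
  have hD : 0 ≤ T * Q * T := (isSelfAdjoint_opPow P _).conjugate_nonneg hQ
  have hspec : spectrum ℝ (T * Q * T) ⊆ Ici 0 := fun t ht => spectrum_nonneg_of_nonneg hD ht
  calc opMean f P Q = S * cfc f (T * Q * T) * S := rfl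
    _ ≤ S * (μ • (T * Q * T) + κ • 1) * S :=
        (isSelfAdjoint_opPow P _).conjugate_le_conjugate <| cfc_le_smul_add_smul_one
          hD.isSelfAdjoint (hf.mono hspec) fun t ht => htangent t (hspec ht)
    _ = μ • (S * (T * Q * T) * S) + κ • (S * S) := by
        rw [mul_add, add_mul, mul_smul_comm, smul_mul_assoc, mul_smul_comm, smul_mul_assoc,
          mul_one]
    _ ≤ μ • Q + κ • P := by
        rw [opPow_half_mul_self hP]
        gcongr
        exact opPow_conj_le hP hQ hQP

lemma smul_add_smul_le_geoMean {A B : H →L[ℂ] H} (hA : IsSelfAdjoint A)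
    (hA_pos : ∀ t ∈ spectrum ℝ A, 0 < t) {m M α : ℝ} (hm : 0 ≤ m) (hmM : m < M)
    (hα0 : 0 < α) (hα1 : α < 1) (hmB : m • A ≤ B) (hBM : B ≤ M • A) :
    ((M ^ α - m ^ α) / (M - m)) • B + ((M * m ^ α - m * M ^ α) / (M - m)) • A ≤
      geoMean α A B :=
  smul_add_smul_le_opMean hA hA_pos hmB hBM (Real.continuous_rpow_const hα0.le).continuousOn
    fun _ ht => (Real.strictConcaveOn_rpow hα0 hα1).concaveOn.chord_le hm
      (hm.trans hmM.le) hmM ht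

lemma geoMean_le_smul_add_smul {P Q : H →L[ℂ] H} (hP : 0 ≤ P) (hQ : 0 ≤ Q) {c μ α : ℝ}
    (hQP : Q ≤ c • P) (hα0 : 0 < α) (hα1 : α < 1) (hμ : 0 < μ) :
    geoMean α P Q ≤ μ • Q + ((1 - α) * (μ / α) ^ (α / (α - 1))) • P :=
  opMean_le_smul_add_smul hP hQ hQP hμ.le (Real.continuous_rpow_const hα0.le).continuousOn
    fun _ ht => rpow_le_mul_add hα0 hα1 hμ ht

end Operator

/-- **Additive reverse of Ando's inequality (general weight).** -/
theorem stmt_4 {H K : Type} [NormedAddCommGroup H] [InnerProductSpace ℂ H] [CompleteSpace H]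
    [NormedAddCommGroup K] [InnerProductSpace ℂ K] [CompleteSpace K]
    (A B : H →L[ℂ] H) (a₁ b₁ a₂ b₂ : ℝ)
    (hb₁ : 0 < b₁) (hba₁ : b₁ < a₁) (hb₂ : 0 < b₂) (hba₂ : b₂ < a₂)
    (hA₁ : b₁ • (1 : H →L[ℂ] H) ≤ A) (hA₂ : A ≤ a₁ • (1 : H →L[ℂ] H))
    (hB₁ : b₂ • (1 : H →L[ℂ] H) ≤ B) (hB₂ : B ≤ a₂ • (1 : H →L[ℂ] H))
    (Φ : (H →L[ℂ] H) →ₗ[ℂ] (K →L[ℂ] K))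
    (hΦ : ∀ X : H →L[ℂ] H, 0 ≤ X → 0 ≤ Φ X)
    (α : ℝ) (hα : α ∈ Set.Ioo (0 : ℝ) 1)
    (μ ν : ℝ)
    (hμ : μ = a₁ * b₁ * ((b₂ * a₁⁻¹) ^ α - (a₂ * b₁⁻¹) ^ α) / (b₁ * b₂ - a₁ * a₂))
    (hν : ν = (a₁ * a₂ * (b₂ * a₁⁻¹) ^ α - b₁ * b₂ * (a₂ * b₁⁻¹) ^ α) / (a₁ * a₂ - b₁ * b₂)) :
    geoMean α (Φ A) (Φ B) - Φ (geoMean α A B) ≤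
      ((1 - α) * (μ / α) ^ (α / (α - 1)) - ν) • Φ A := by
  obtain ⟨hα0, hα1⟩ := hα
  have ha₁ : 0 < a₁ := hb₁.trans hba₁
  have ha₂ : 0 < a₂ := hb₂.trans hba₂
  have hmM : b₂ / a₁ < a₂ / b₁ := by rw [div_lt_div_iff₀ ha₁ hb₁]; nlinarith
  rw [← div_eq_mul_inv, ← div_eq_mul_inv] at hμ hν
  rw [chord_slope_eq ha₁.ne' hb₁.ne' (by nlinarith)] at hμ
  rw [chord_intercept_eq ha₁.ne' hb₁.ne' (by nlinarith)] at hν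
  have hμ_pos : 0 < μ := hμ ▸ div_pos (sub_pos.2 (Real.rpow_lt_rpow (by positivity) hmM hα0))
    (sub_pos.2 hmM)
  have hA : IsSelfAdjoint A := ((IsSelfAdjoint.all b₁).smul (.one _)).of_ge hA₁
  have hA_pos (t : ℝ) (ht : t ∈ spectrum ℝ A) : 0 < t :=
    hb₁.trans_le (spectrum_subset_Icc_of_le hA hA₁ hA₂ ht).1
  have hBA : B ≤ (a₂ / b₁) • A := le_div_smul_of_le_smul ha₂.le hb₁ hB₂ hA₁
  have hΦ_mono : Monotone Φ := (monotone_iff_map_nonneg Φ).2 hΦ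
  have hlower : μ • Φ B + ν • Φ A ≤ Φ (geoMean α A B) := by
    have := hΦ_mono <| hμ ▸ hν ▸ smul_add_smul_le_geoMean hA hA_pos (by positivity) hmM hα0 hα1
      (div_smul_le_of_le_smul ha₁ hb₂.le hA₂ hB₁) hBA
    rwa [map_add, LinearMap.map_smul_of_tower, LinearMap.map_smul_of_tower] at this
  have hupper := geoMean_le_smul_add_smul (hΦ A ((smul_nonneg hb₁.le zero_le_one).trans hA₁))
    (hΦ B ((smul_nonneg hb₂.le zero_le_one).trans hB₁))
    (by simpa only [LinearMap.map_smul_of_tower] using hΦ_mono hBA) hα0 hα1 hμ_pos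
  calc _ ≤ _ - _ := sub_le_sub hupper hlower
    _ = _ := by rw [sub_smul]; abel
end
end

section
/- Let H and K be complex Hilbert spaces, A, B ∈ B(H) positive invertible operators with m₁²I ≤ A ≤ M₁²I and m₂²I ≤ B ≤ M₂²I for positive reals m₁ < M₁ and m₂ < M₂, and let Φ : B(H) → B(K) be a strictly positive linear map. Then Φ(A # B)^{−1/2} Φ(B) Φ(A # B)^{−1/2} − Φ(A # B)^{1/2} Φ(A)^{−1} Φ(A # B)^{1/2} ≤ (√(M₂/m₁) − √(m₂/M₁))² I. -/
open scoped InnerProductSpace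

noncomputable section

set_option maxHeartbeats 1000000
set_option synthInstance.maxHeartbeats 400000

section Tools

variable {H : Type} [NormedAddCommGroup H] [InnerProductSpace ℂ H] [CompleteSpace H]

lemma spec_pos {X : H →L[ℂ] H} (hX : 0 ≤ X) (hXu : IsUnit X) :
    ∀ x ∈ spectrum ℝ X, 0 < x := by
  intro x hx
  rcases (spectrum_nonneg_of_nonneg hX hx).lt_or_eq with h | h
  · exact h
  · exact absurd (h ▸ hx) (spectrum.zero_notMem_iff ℝ |>.mpr hXu)

lemma contOn_rpow (r : ℝ) {s : Set ℝ} (hs : ∀ x ∈ s, 0 < x) :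
    ContinuousOn (fun t : ℝ => t ^ r) s := fun x hx =>
  (Real.continuousAt_rpow_const x r (Or.inl (hs x hx).ne')).continuousWithinAt

lemma opPow_selfAdjoint (X : H →L[ℂ] H) (r : ℝ) : IsSelfAdjoint (opPow X r) :=
  cfc_predicate _ _

lemma opPow_nonneg {X : H →L[ℂ] H} (hX : 0 ≤ X) (r : ℝ) : 0 ≤ opPow X r :=
  cfc_nonneg fun x hx => Real.rpow_nonneg (spectrum_nonneg_of_nonneg hX hx) r

lemma opPow_mul {X : H →L[ℂ] H} (hX : 0 ≤ X) (hXu : IsUnit X) (r s : ℝ) :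
    opPow X r * opPow X s = opPow X (r + s) := by
  unfold opPow
  rw [← cfc_mul _ _ X (contOn_rpow r (spec_pos hX hXu)) (contOn_rpow s (spec_pos hX hXu))]
  exact cfc_congr fun x hx => (Real.rpow_add (spec_pos hX hXu x hx) r s).symm

lemma opPow_zero_s9 {X : H →L[ℂ] H} (hX : 0 ≤ X) : opPow X 0 = 1 := by
  unfold opPow
  simp only [Real.rpow_zero]
  rw [cfc_const (1 : ℝ) X hX.isSelfAdjoint, map_one]

lemma opPow_one_s9 {X : H →L[ℂ] H} (hX : 0 ≤ X) : opPow X 1 = X := by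
  unfold opPow
  simp only [Real.rpow_one]
  exact cfc_id' ℝ X hX.isSelfAdjoint

lemma opPow_isUnit {X : H →L[ℂ] H} (hX : 0 ≤ X) (hXu : IsUnit X) (r : ℝ) :
    IsUnit (opPow X r) :=
  isUnit_iff_exists.mpr ⟨opPow X (-r),
    by rw [opPow_mul hX hXu, add_neg_cancel, opPow_zero_s9 hX],
    by rw [opPow_mul hX hXu, neg_add_cancel, opPow_zero_s9 hX]⟩

lemma real_smul_nonneg {r : ℝ} (hr : 0 ≤ r) {X : H →L[ℂ] H} (hX : 0 ≤ X) :
    0 ≤ r • X := by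
  have h := star_left_conjugate_nonneg hX ((Real.sqrt r) • (1 : H →L[ℂ] H))
  simpa [star_smul, smul_mul_assoc, mul_smul_comm, smul_smul, Real.mul_self_sqrt hr] using h

lemma real_smul_mono {r : ℝ} (hr : 0 ≤ r) {X Y : H →L[ℂ] H} (hXY : X ≤ Y) :
    r • X ≤ r • Y := by
  rw [← sub_nonneg, ← smul_sub]
  exact real_smul_nonneg hr (sub_nonneg.mpr hXY)

lemma spectrum_subset_Icc {X : H →L[ℂ] H} (hsa : IsSelfAdjoint X) {α β : ℝ}
    (h1 : α • (1 : H →L[ℂ] H) ≤ X) (h2 : X ≤ β • (1 : H →L[ℂ] H)) :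
    spectrum ℝ X ⊆ Set.Icc α β := by
  rw [← Algebra.algebraMap_eq_smul_one] at h1 h2
  intro x hx
  exact ⟨algebraMap_le_iff_le_spectrum (R := ℝ) hsa |>.mp h1 x hx,
    le_algebraMap_iff_spectrum_le (R := ℝ) hsa |>.mp h2 x hx⟩

lemma key_scalar {a b t : ℝ} (ha : 0 < a) (hb : 0 < b) (ht : t ∈ Set.Icc (a^2) (b^2)) :
    t + a*b ≤ (a+b) * t ^ (1/2 : ℝ) := by
  obtain ⟨h1, h2⟩ := ht
  have ht0 : (0:ℝ) ≤ t := le_trans (by positivity) h1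
  rw [← Real.sqrt_eq_rpow]
  have hs2 : Real.sqrt t ^ 2 = t := Real.sq_sqrt ht0
  have hsa : a ≤ Real.sqrt t := by
    rw [show a = Real.sqrt (a^2) from (Real.sqrt_sq ha.le).symm]
    exact Real.sqrt_le_sqrt h1
  have hsb : Real.sqrt t ≤ b := by
    rw [show b = Real.sqrt (b^2) from (Real.sqrt_sq hb.le).symm]
    exact Real.sqrt_le_sqrt h2
  nlinarith [hs2, hsa, hsb]

end Tools

/-- **Kalmkin–McLenaghan inequality.** -/
theorem stmt_9 {H K : Type} [NormedAddCommGroup H] [InnerProductSpace ℂ H] [CompleteSpace H]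
    [NormedAddCommGroup K] [InnerProductSpace ℂ K] [CompleteSpace K]
    (A B : H →L[ℂ] H) (hA : 0 ≤ A) (hAu : IsUnit A) (hB : 0 ≤ B) (hBu : IsUnit B)
    (m₁ M₁ m₂ M₂ : ℝ) (hm₁ : 0 < m₁) (hM₁ : m₁ < M₁) (hm₂ : 0 < m₂) (hM₂ : m₂ < M₂)
    (hA₁ : (m₁ ^ 2) • (1 : H →L[ℂ] H) ≤ A) (hA₂ : A ≤ (M₁ ^ 2) • (1 : H →L[ℂ] H))
    (hB₁ : (m₂ ^ 2) • (1 : H →L[ℂ] H) ≤ B) (hB₂ : B ≤ (M₂ ^ 2) • (1 : H →L[ℂ] H))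
    (Φ : (H →L[ℂ] H) →ₗ[ℂ] (K →L[ℂ] K))
    (hΦ : ∀ X : H →L[ℂ] H, 0 ≤ X → 0 ≤ Φ X)
    (hΦu : ∀ X : H →L[ℂ] H, 0 ≤ X → IsUnit X → IsUnit (Φ X)) :
    opPow (Φ (geoMean (1/2) A B)) (-(1/2)) * Φ B * opPow (Φ (geoMean (1/2) A B)) (-(1/2)) -
        opPow (Φ (geoMean (1/2) A B)) (1/2) * Ring.inverse (Φ A) *
          opPow (Φ (geoMean (1/2) A B)) (1/2) ≤
      ((Real.sqrt (M₂ / m₁) - Real.sqrt (m₂ / M₁)) ^ 2) • (1 : K →L[ℂ] K) := by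
  -- scalar setup
  set a : ℝ := m₂ / M₁ with ha_def
  set b : ℝ := M₂ / m₁ with hb_def
  have hM₁0 : (0:ℝ) < M₁ := hm₁.trans hM₁
  have hM₂0 : (0:ℝ) < M₂ := hm₂.trans hM₂
  have ha0 : 0 < a := div_pos hm₂ hM₁0
  have hb0 : 0 < b := div_pos hM₂0 hm₁
  set μ : ℝ := Real.sqrt (a * b) with hμ_def
  have hμ0 : 0 ≤ μ := Real.sqrt_nonneg _
  have hμ2 : μ ^ 2 = a * b := Real.sq_sqrt (by positivity)
  -- operators on H
  set S := opPow A (1/2) with hS_def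
  set P := opPow A (-(1/2)) with hP_def
  set T := P * B * P with hT_def
  have hSsa : star S = S := (opPow_selfAdjoint A _).star_eq
  have hPsa : star P = P := (opPow_selfAdjoint A _).star_eq
  have hPu : IsUnit P := opPow_isUnit hA hAu _
  have hSP : S * P = 1 := by
    rw [hS_def, hP_def, opPow_mul hA hAu, show (1/2 + -(1/2) : ℝ) = 0 by norm_num,
      opPow_zero_s9 hA]
  have hPS : P * S = 1 := by
    rw [hS_def, hP_def, opPow_mul hA hAu, show (-(1/2) + 1/2 : ℝ) = 0 by norm_num,
      opPow_zero_s9 hA]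
  have hSS : S * S = A := by
    rw [hS_def, opPow_mul hA hAu, show (1/2 + 1/2 : ℝ) = 1 by norm_num, opPow_one_s9 hA]
  have hPP : P * P = opPow A (-1) := by
    rw [hP_def, opPow_mul hA hAu, show (-(1/2) + -(1/2) : ℝ) = -1 by norm_num]
  have hT_nonneg : 0 ≤ T := by
    have h := star_left_conjugate_nonneg hB P
    rwa [hPsa, ← hT_def] at h
  have hTsa : IsSelfAdjoint T := hT_nonneg.isSelfAdjoint
  have hT_unit : IsUnit T := (hPu.mul hBu).mul hPu
  -- spectrum of A and bounds on A⁻¹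
  have specA : spectrum ℝ A ⊆ Set.Icc (m₁^2) (M₁^2) :=
    spectrum_subset_Icc hA.isSelfAdjoint hA₁ hA₂
  have hAinv_le : opPow A (-1) ≤ (m₁^2)⁻¹ • 1 := by
    rw [← Algebra.algebraMap_eq_smul_one]
    unfold opPow
    rw [cfc_le_algebraMap_iff _ _ _ (contOn_rpow _ (spec_pos hA hAu)) hA.isSelfAdjoint]
    intro x hx
    rw [Real.rpow_neg_one]
    exact inv_anti₀ (by positivity) (specA hx).1
  have hAinv_ge : (M₁^2)⁻¹ • 1 ≤ opPow A (-1) := by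
    rw [← Algebra.algebraMap_eq_smul_one]
    unfold opPow
    rw [algebraMap_le_cfc_iff _ _ _ (contOn_rpow _ (spec_pos hA hAu)) hA.isSelfAdjoint]
    intro x hx
    rw [Real.rpow_neg_one]
    exact inv_anti₀ (spec_pos hA hAu x hx) (specA hx).2
  -- bounds on T
  have hT_le : T ≤ (b^2) • 1 := by
    calc T = star P * B * P := by rw [hPsa]
      _ ≤ star P * ((M₂^2) • 1) * P := star_left_conjugate_le_conjugate hB₂ P
      _ = (M₂^2) • (P * P) := by
          rw [hPsa, mul_smul_comm, mul_one, smul_mul_assoc]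
      _ = (M₂^2) • opPow A (-1) := by rw [hPP]
      _ ≤ (M₂^2) • ((m₁^2)⁻¹ • 1) := real_smul_mono (by positivity) hAinv_le
      _ = (b^2) • 1 := by
          rw [smul_smul, hb_def, div_pow, div_eq_mul_inv]
  have hT_ge : (a^2) • 1 ≤ T := by
    calc (a^2) • (1 : H →L[ℂ] H) = (m₂^2) • ((M₁^2)⁻¹ • 1) := by
          rw [smul_smul, ha_def, div_pow, div_eq_mul_inv]
      _ ≤ (m₂^2) • opPow A (-1) := real_smul_mono (by positivity) hAinv_ge
      _ = (m₂^2) • (P * P) := by rw [hPP]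
      _ = star P * ((m₂^2) • 1) * P := by
          rw [hPsa, mul_smul_comm, mul_one, smul_mul_assoc]
      _ ≤ star P * B * P := star_left_conjugate_le_conjugate hB₁ P
      _ = T := by rw [hPsa]
  have specT : spectrum ℝ T ⊆ Set.Icc (a^2) (b^2) := spectrum_subset_Icc hTsa hT_ge hT_le
  have specT_pos := spec_pos hT_nonneg hT_unit
  -- the key cfc inequality
  have h1 : cfc (fun t : ℝ => t + a*b) T = T + (a*b) • 1 := by
    have e : cfc (fun t : ℝ => t + a*b) T
        = cfc (fun t : ℝ => t) T + cfc (fun _ : ℝ => a*b) T :=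
      cfc_add T _ _ continuousOn_id continuousOn_const
    rw [cfc_id' ℝ T hTsa, cfc_const (a*b) T hTsa, Algebra.algebraMap_eq_smul_one] at e
    exact e
  have h2 : cfc (fun t : ℝ => (a+b) * t ^ (1/2 : ℝ)) T = (a+b) • opPow T (1/2) :=
    cfc_const_mul (a+b) (fun t : ℝ => t ^ (1/2:ℝ)) T (contOn_rpow _ specT_pos)
  have hkey : T + (a*b) • 1 ≤ (a+b) • opPow T (1/2) := by
    rw [← h1, ← h2]
    refine cfc_mono (fun x hx => key_scalar ha0 hb0 (specT hx)) ?_ ?_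
    · exact (continuous_id.add continuous_const).continuousOn
    · exact continuousOn_const.mul (contOn_rpow _ specT_pos)
  -- conjugate by S
  have hG : geoMean (1/2) A B = S * opPow T (1/2) * S := by
    rw [hS_def, hT_def, hP_def]; rfl
  have hSTS : S * T * S = B := by
    rw [hT_def, show S * (P * B * P) * S = (S * P) * B * (P * S) by noncomm_ring,
      hSP, hPS, one_mul, mul_one]
  have hmainH : B + (a*b) • A ≤ (a+b) • geoMean (1/2) A B := by
    have h := star_left_conjugate_le_conjugate hkey S
    rw [hSsa] at h
    have hL : S * (T + (a*b) • 1) * S = B + (a*b) • A := by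
      rw [mul_add, add_mul, hSTS, mul_smul_comm, mul_one, smul_mul_assoc, hSS]
    have hR : S * ((a+b) • opPow T (1/2)) * S = (a+b) • geoMean (1/2) A B := by
      rw [mul_smul_comm, smul_mul_assoc, hG]
    rwa [hL, hR] at h
  -- apply Φ
  have hPhi_smul : ∀ (r : ℝ) (X : H →L[ℂ] H), Φ (r • X) = r • Φ X := by
    intro r X
    rw [show r • X = (r : ℂ) • X from (Complex.coe_smul r X).symm, map_smul,
      ← Complex.coe_smul]
  have hPhi_mono : ∀ {X Y : H →L[ℂ] H}, X ≤ Y → Φ X ≤ Φ Y := by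
    intro X Y h
    have h2 := hΦ _ (sub_nonneg.mpr h)
    rw [map_sub] at h2
    exact sub_nonneg.mp h2
  have hmainK : Φ B + (a*b) • Φ A ≤ (a+b) • Φ (geoMean (1/2) A B) := by
    have h := hPhi_mono hmainH
    rwa [map_add, hPhi_smul, hPhi_smul] at h
  -- operators on K
  set C := Φ (geoMean (1/2) A B) with hC_def
  set Y := Φ A with hY_def
  set Iv := Ring.inverse Y with hIv_def
  have hG_nonneg : 0 ≤ geoMean (1/2) A B := by
    rw [hG]
    have h := star_left_conjugate_nonneg (opPow_nonneg hT_nonneg (1/2)) S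
    rwa [hSsa] at h
  have hG_unit : IsUnit (geoMean (1/2) A B) := by
    rw [hG]
    exact ((opPow_isUnit hA hAu _).mul (opPow_isUnit hT_nonneg hT_unit _)).mul
      (opPow_isUnit hA hAu _)
  have hC_nonneg : 0 ≤ C := hΦ _ hG_nonneg
  have hCu : IsUnit C := hΦu _ hG_nonneg hG_unit
  have hCsa : star C = C := hC_nonneg.isSelfAdjoint.star_eq
  have hY_nonneg : 0 ≤ Y := hΦ A hA
  have hYu : IsUnit Y := hΦu A hA hAu
  have hYsa : star Y = Y := hY_nonneg.isSelfAdjoint.star_eq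
  have hIvY : Iv * Y = 1 := Ring.inverse_mul_cancel Y hYu
  have hYIv : Y * Iv = 1 := Ring.mul_inverse_cancel Y hYu
  have hIvsa : star Iv = Iv := by
    have h1 : star Iv * Y = 1 := by
      rw [← hYsa, ← star_mul, hYIv, star_one]
    calc star Iv = star Iv * 1 := (mul_one _).symm
      _ = star Iv * (Y * Iv) := by rw [hYIv]
      _ = (star Iv * Y) * Iv := (mul_assoc _ _ _).symm
      _ = Iv := by rw [h1, one_mul]
  have hIv_nonneg : 0 ≤ Iv := by
    have h := star_left_conjugate_nonneg hY_nonneg Iv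
    rwa [hIvsa, hIvY, one_mul] at h
  -- the quadratic trick
  have hquad : (2*μ) • C - (μ^2) • Y ≤ C * Iv * C := by
    have h := star_left_conjugate_nonneg hIv_nonneg (C - μ • Y)
    have hst : star (C - μ • Y) = C - μ • Y := by
      rw [star_sub, star_smul, star_trivial μ, hCsa, hYsa]
    have hexp : (C - μ•Y) * Iv * (C - μ•Y) = C*Iv*C - (2*μ)•C + (μ^2)•Y := by
      have hf : (C - μ•Y) * Iv = C*Iv - μ•(1 : K →L[ℂ] K) := by
        rw [sub_mul, smul_mul_assoc, hYIv]
      rw [hf, sub_mul, mul_sub, mul_sub, mul_smul_comm μ (C*Iv) Y, mul_assoc C Iv Y, hIvY,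
        mul_one, smul_mul_assoc μ 1 C, one_mul, smul_mul_assoc μ 1 (μ•Y), one_mul, smul_smul]
      module
    rw [hst, hexp] at h
    have h' : (0:K →L[ℂ] K) ≤ C*Iv*C - ((2*μ)•C - (μ^2)•Y) := by
      calc (0:K →L[ℂ] K) ≤ C*Iv*C - (2*μ)•C + (μ^2)•Y := h
        _ = C*Iv*C - ((2*μ)•C - (μ^2)•Y) := by module
    exact sub_nonneg.mp h'
  have hXB : Φ B ≤ (a+b) • C - (μ^2) • Y := by
    rw [le_sub_iff_add_le, hμ2]
    exact hmainK
  have hE : Φ B - C * Iv * C ≤ (a + b - 2*μ) • C := by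
    calc Φ B - C*Iv*C ≤ ((a+b)•C - (μ^2)•Y) - ((2*μ)•C - (μ^2)•Y) := sub_le_sub hXB hquad
      _ = (a + b - 2*μ) • C := by module
  -- final conjugation by C^{-1/2}
  set Q := opPow C (-(1/2)) with hQ_def
  have hQsa : star Q = Q := (opPow_selfAdjoint C _).star_eq
  have hQC : Q * C = opPow C (1/2) := by
    have h : Q * C = Q * opPow C 1 := by rw [opPow_one_s9 hC_nonneg]
    rw [h, hQ_def, opPow_mul hC_nonneg hCu, show (-(1/2) + 1 : ℝ) = 1/2 by norm_num]
  have hCQ : C * Q = opPow C (1/2) := by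
    have h : C * Q = opPow C 1 * Q := by rw [opPow_one_s9 hC_nonneg]
    rw [h, hQ_def, opPow_mul hC_nonneg hCu, show (1 + -(1/2) : ℝ) = 1/2 by norm_num]
  have hQCQ : Q * C * Q = 1 := by
    rw [hQC, hQ_def, opPow_mul hC_nonneg hCu, show (1/2 + -(1/2) : ℝ) = 0 by norm_num,
      opPow_zero_s9 hC_nonneg]
  have h := star_left_conjugate_le_conjugate hE Q
  rw [hQsa] at h
  have hL : Q * (Φ B - C*Iv*C) * Q = Q * Φ B * Q - opPow C (1/2) * Iv * opPow C (1/2) := by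
    rw [mul_sub, sub_mul, show Q * (C*Iv*C) * Q = (Q*C)*Iv*(C*Q) by noncomm_ring, hQC, hCQ]
  have hR : Q * ((a + b - 2*μ) • C) * Q = (a + b - 2*μ) • (1 : K →L[ℂ] K) := by
    rw [mul_smul_comm, smul_mul_assoc, hQCQ]
  rw [hL, hR] at h
  have hconst : (Real.sqrt (M₂ / m₁) - Real.sqrt (m₂ / M₁)) ^ 2 = a + b - 2*μ := by
    rw [hμ_def, ha_def, hb_def, sub_sq,
      Real.sq_sqrt (div_nonneg hM₂0.le hm₁.le), Real.sq_sqrt (div_nonneg hm₂.le hM₁0.le),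
      Real.sqrt_mul (div_nonneg hm₂.le hM₁0.le)]
    ring
  rw [hconst]
  exact h
end
end

section
/- Let H and K be complex Hilbert spaces, let Φ : B(H) → B(K) be a unital positive linear map, and let A ∈ B(H) be selfadjoint with bI ≤ A ≤ aI for real numbers b ≤ a. Then Φ(A²) − Φ(A)² ≤ (1/4)(a − b)² I. -/
/-!
Since `b ≤ A ≤ a`, the functional calculus gives `(a - A)(A - b) ≥ 0`, that is
`A² ≤ (a + b) A - ab`. A unital positive map is monotone, so `Φ(A²) ≤ (a + b) Φ(A) - ab`, and
completing the square in the selfadjoint element `Φ(A)` turns this into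
`Φ(A²) - Φ(A)² ≤ (a - b)²/4 - (Φ(A) - (a + b)/2)² ≤ (a - b)²/4`.
-/

open scoped InnerProductSpace

noncomputable section

section CStarAlgebra

variable {A : Type*} [CStarAlgebra A] [PartialOrder A] [StarOrderedRing A]

lemma IsSelfAdjoint.of_smul_one_le {x : A} {r : ℝ} (h : r • (1 : A) ≤ x) : IsSelfAdjoint x := by
  simpa using (sub_nonneg.2 h).isSelfAdjoint.add ((IsSelfAdjoint.all r).smul (.one A))

lemma mul_self_le_of_smul_one_le_of_le_smul_one {x : A} {a b : ℝ}
    (hb : b • (1 : A) ≤ x) (ha : x ≤ a • (1 : A)) :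
    x * x ≤ (a + b) • x - (a * b) • (1 : A) := by
  have hx : IsSelfAdjoint x := .of_smul_one_le hb
  have hbσ : ∀ t ∈ spectrum ℝ x, b ≤ t :=
    (algebraMap_le_iff_le_spectrum hx).mp (by rwa [Algebra.algebraMap_eq_smul_one])
  have haσ : ∀ t ∈ spectrum ℝ x, t ≤ a :=
    (le_algebraMap_iff_spectrum_le hx).mp (by rwa [Algebra.algebraMap_eq_smul_one])
  have hpos : 0 ≤ cfc (fun t : ℝ => (a + b) * t - a * b - t * t) x :=
    cfc_nonneg fun t ht => by nlinarith [hbσ t ht, haσ t ht]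
  rw [cfc_sub _ _ x, cfc_sub _ _ x, cfc_const_mul _ _ x, cfc_id' ℝ x, cfc_const _ x,
    cfc_mul _ _ x, cfc_id' ℝ x, Algebra.algebraMap_eq_smul_one] at hpos
  exact sub_nonneg.1 hpos

lemma sub_mul_self_le_of_le_smul_sub_smul_one {y z : A} {a b : ℝ} (hy : IsSelfAdjoint y)
    (hz : z ≤ (a + b) • y - (a * b) • (1 : A)) :
    z - y * y ≤ ((1 / 4) * (a - b) ^ 2) • (1 : A) := by
  set w := y - ((a + b) / 2) • (1 : A)
  have hw : 0 ≤ w * w := (hy.sub ((IsSelfAdjoint.all _).smul (.one A))).mul_self_nonneg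
  have hsquare : ((1 / 4) * (a - b) ^ 2) • (1 : A) - (z - y * y)
      = ((a + b) • y - (a * b) • (1 : A) - z) + w * w := by
    simp only [w, mul_sub, sub_mul, smul_mul_assoc, mul_smul_comm, one_mul, mul_one]
    module
  rw [← sub_nonneg, hsquare]
  exact add_nonneg (sub_nonneg.2 hz) hw

end CStarAlgebra

theorem stmt_10_general {H K : Type} [NormedAddCommGroup H] [InnerProductSpace ℂ H] [CompleteSpace H]
    [NormedAddCommGroup K] [InnerProductSpace ℂ K] [CompleteSpace K]
    (Φ : (H →L[ℂ] H) →ₗ[ℂ] (K →L[ℂ] K))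
    (hΦ : ∀ X : H →L[ℂ] H, 0 ≤ X → 0 ≤ Φ X)
    (hΦ1 : Φ 1 = 1)
    (A : H →L[ℂ] H)
    (a b : ℝ)
    (h₁ : b • (1 : H →L[ℂ] H) ≤ A) (h₂ : A ≤ a • (1 : H →L[ℂ] H)) :
    Φ (A * A) - Φ A * Φ A ≤ ((1/4) * (a - b) ^ 2) • (1 : K →L[ℂ] K) := by
  have hmono : Monotone Φ := OrderHomClass.mono (PositiveLinearMap.mk₀ Φ hΦ)
  have hΦb : b • (1 : K →L[ℂ] K) ≤ Φ A := by
    simpa [Φ.map_smul_of_tower, hΦ1] using hmono h₁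
  have hΦsq : Φ (A * A) ≤ (a + b) • Φ A - (a * b) • (1 : K →L[ℂ] K) := by
    simpa [Φ.map_smul_of_tower, hΦ1] using
      hmono (mul_self_le_of_smul_one_le_of_le_smul_one h₁ h₂)
  exact sub_mul_self_le_of_le_smul_sub_smul_one (.of_smul_one_le hΦb) hΦsq

/-- **Lemma 3.9.** For a unital positive linear map `Φ` and a selfadjoint `A` with
`bI ≤ A ≤ aI`, one has `Φ(A²) - Φ(A)² ≤ (1/4)(a-b)² I`. -/
theorem stmt_10 {H K : Type} [NormedAddCommGroup H] [InnerProductSpace ℂ H] [CompleteSpace H]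
    [NormedAddCommGroup K] [InnerProductSpace ℂ K] [CompleteSpace K]
    (Φ : (H →L[ℂ] H) →ₗ[ℂ] (K →L[ℂ] K))
    (hΦ : ∀ X : H →L[ℂ] H, 0 ≤ X → 0 ≤ Φ X)
    (hΦ1 : Φ 1 = 1)
    (A : H →L[ℂ] H) (hA : IsSelfAdjoint A)
    (a b : ℝ) (hab : b ≤ a)
    (h₁ : b • (1 : H →L[ℂ] H) ≤ A) (h₂ : A ≤ a • (1 : H →L[ℂ] H)) :
    Φ (A * A) - Φ A * Φ A ≤ ((1/4) * (a - b) ^ 2) • (1 : K →L[ℂ] K) :=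
  stmt_10_general Φ hΦ hΦ1 A a b h₁ h₂
end
end
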